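/- For every integer i ≥ 0 and every real x with 0 < |x| < 1/2, the series Σ_{j≥0} D_∞(i,j)·x^j converges absolutely and equals x^i · C(x²)^{i+1}, where C(t) = (1 − √(1 − 4t))/(2t). -/

import Mathlib

/-!
Cutting a path that ends at height `a + b + 1` at its last visit to height `a` gives the
convolution `D(a+b+1, n+1) = ∑_{k+l=n} D(a,k) D(b,l)`, so the generating functions
`F_i(x) = ∑_j D(i,j) x^j` satisfy `F_{a+b+1} = x F_a F_b`. Hence `F_i = x^i F_0^{i+1}` and
`F_0 = 1 + x F_1 = 1 + x² F_0²`. Of the two roots of this quadratic, the right one is singled out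
by `D(i,j) ≤ 2^j`: it bounds `|F_i| = |x|^i |F_0|^{i+1}` by `(1 - 2|x|)⁻¹` uniformly in `i`,
which forces `|x| F_0 ≤ 1`.
-/

/-- Number of lattice paths from `(0,0)` to `(j,i)` with steps `(1,1)` and `(1,-1)`
that never pass below the x-axis. -/
def dyckD : ℕ → ℕ → ℕ
  | i, 0 => if i = 0 then 1 else 0
  | i, j + 1 => (if 1 ≤ i then dyckD (i - 1) j else 0) + dyckD (i + 1) j

open Finset

theorem dyckD_zero_right (i : ℕ) : dyckD i 0 = if i = 0 then 1 else 0 := rfl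

theorem dyckD_zero_succ (j : ℕ) : dyckD 0 (j + 1) = dyckD 1 j := by
  simp [dyckD]

theorem dyckD_succ_succ (i j : ℕ) : dyckD (i + 1) (j + 1) = dyckD i j + dyckD (i + 2) j := by
  simp [dyckD]

theorem dyckD_le_two_pow (i j : ℕ) : dyckD i j ≤ 2 ^ j := by
  induction j generalizing i with
  | zero => rw [dyckD_zero_right]; split <;> simp
  | succ j ih =>
    cases i with
    | zero => rw [dyckD_zero_succ]; exact (ih 1).trans (Nat.pow_le_pow_right two_pos j.le_succ)
    | succ i => rw [dyckD_succ_succ, pow_succ, mul_two]; exact add_le_add (ih i) (ih (i + 2))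

theorem dyckD_add_add_one_succ (a b n : ℕ) :
    dyckD (a + b + 1) (n + 1) = ∑ p ∈ antidiagonal n, dyckD a p.1 * dyckD b p.2 := by
  induction n generalizing b with
  | zero => cases a <;> cases b <;> simp [dyckD]
  | succ n ih =>
    rw [Nat.sum_antidiagonal_succ']
    cases b with
    | zero =>
      simp only [dyckD_zero_right, if_true, mul_one, dyckD_zero_succ, ← ih 1]
      rw [dyckD_succ_succ]
    | succ c =>
      rw [dyckD_succ_succ, show a + (c + 1) = a + c + 1 by ring,
        show a + c + 1 + 2 = a + (c + 2) + 1 by ring, ih c, ih (c + 2)]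
      simp [dyckD_zero_right, dyckD_succ_succ, mul_add, sum_add_distrib]

section GeneratingFunction

variable {𝕜 : Type*} [NormedField 𝕜] {x : 𝕜}

noncomputable def dyckGF (i : ℕ) (x : 𝕜) : 𝕜 := ∑' j, (dyckD i j : 𝕜) * x ^ j

theorem norm_dyckD_mul_pow_le (i j : ℕ) (x : 𝕜) :
    ‖(dyckD i j : 𝕜) * x ^ j‖ ≤ (2 * ‖x‖) ^ j := by
  have hD : (dyckD i j : ℝ) ≤ 2 ^ j := by exact_mod_cast dyckD_le_two_pow i j
  rw [norm_mul, norm_pow, mul_pow]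
  gcongr
  exact (Nat.norm_cast_le _).trans (by simpa using hD)

theorem summable_norm_dyckD_mul_pow (i : ℕ) (hx : ‖x‖ < 1 / 2) :
    Summable fun j ↦ ‖(dyckD i j : 𝕜) * x ^ j‖ :=
  .of_nonneg_of_le (fun _ ↦ norm_nonneg _) (norm_dyckD_mul_pow_le i · x)
    (summable_geometric_of_lt_one (by positivity) (by linarith))

theorem norm_dyckGF_le (i : ℕ) (hx : ‖x‖ < 1 / 2) : ‖dyckGF i x‖ ≤ (1 - 2 * ‖x‖)⁻¹ :=
  tsum_of_norm_bounded (hasSum_geometric_of_lt_one (by positivity) (by linarith))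
    (norm_dyckD_mul_pow_le i · x)

variable [CompleteSpace 𝕜]

theorem dyckGF_add_add_one (a b : ℕ) (hx : ‖x‖ < 1 / 2) :
    dyckGF (a + b + 1) x = x * (dyckGF a x * dyckGF b x) := by
  have cauchy := tsum_mul_tsum_eq_tsum_sum_antidiagonal_of_summable_norm (R := 𝕜)
    (summable_norm_dyckD_mul_pow a hx) (summable_norm_dyckD_mul_pow b hx)
  unfold dyckGF
  rw [(summable_norm_dyckD_mul_pow _ hx).of_norm.tsum_eq_zero_add, cauchy, ← tsum_mul_left]
  simp only [dyckD_zero_right, Nat.add_eq_zero_iff, one_ne_zero, and_false, if_false,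
    Nat.cast_zero, zero_mul, zero_add, dyckD_add_add_one_succ, Nat.cast_sum, Nat.cast_mul,
    sum_mul, mul_sum]
  refine tsum_congr fun n ↦ sum_congr rfl fun p hp ↦ ?_
  rw [← mem_antidiagonal.mp hp]
  ring

theorem dyckGF_zero (hx : ‖x‖ < 1 / 2) : dyckGF 0 x = 1 + x * dyckGF 1 x := by
  unfold dyckGF
  rw [(summable_norm_dyckD_mul_pow _ hx).of_norm.tsum_eq_zero_add, ← tsum_mul_left]
  simp only [dyckD_zero_right, dyckD_zero_succ, if_true, Nat.cast_one, pow_zero, mul_one,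
    pow_succ]
  congr 1
  exact tsum_congr fun _ ↦ by ring

theorem dyckGF_eq_pow (i : ℕ) (hx : ‖x‖ < 1 / 2) :
    dyckGF i x = x ^ i * dyckGF 0 x ^ (i + 1) := by
  induction i with
  | zero => simp
  | succ i ih => rw [← zero_add i, dyckGF_add_add_one 0 i hx, zero_add, ih]; ring

theorem dyckGF_zero_eq_one_add_mul_sq (hx : ‖x‖ < 1 / 2) :
    dyckGF 0 x = 1 + x ^ 2 * dyckGF 0 x ^ 2 := by
  linear_combination dyckGF_zero hx + x * dyckGF_eq_pow 1 hx

theorem norm_mul_norm_dyckGF_zero_le_one (hx : ‖x‖ < 1 / 2) : ‖x‖ * ‖dyckGF 0 x‖ ≤ 1 := by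
  by_contra! hlt
  have hF : 0 < ‖dyckGF 0 x‖ := pos_of_mul_pos_right (one_pos.trans hlt) (norm_nonneg x)
  obtain ⟨n, hn⟩ := ((tendsto_pow_atTop_atTop_of_one_lt hlt).eventually_gt_atTop
    ((1 - 2 * ‖x‖)⁻¹ / ‖dyckGF 0 x‖)).exists
  have hbound := norm_dyckGF_le n hx
  rw [dyckGF_eq_pow n hx, norm_mul, norm_pow, norm_pow, pow_succ, ← mul_assoc, ← mul_pow]
    at hbound
  rw [div_lt_iff₀ hF] at hn
  linarith

end GeneratingFunction

theorem eq_one_sub_sqrt_div_of_eq_one_add_mul_sq {t y : ℝ} (ht : t ≠ 0)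
    (hy : y = 1 + t * y ^ 2) (hty : 2 * t * y ≤ 1) : y = (1 - √(1 - 4 * t)) / (2 * t) := by
  have hsq : (1 - 2 * t * y) ^ 2 = 1 - 4 * t := by linear_combination (-4 * t) * hy
  rw [← hsq, Real.sqrt_sq (by linarith)]
  field_simp
  ring

theorem two_mul_sq_mul_dyckGF_zero_le_one {x : ℝ} (hx : |x| < 1 / 2) :
    2 * x ^ 2 * dyckGF 0 x ≤ 1 := by
  have hbound := norm_mul_norm_dyckGF_zero_le_one (x := x) (by rwa [Real.norm_eq_abs])
  rw [Real.norm_eq_abs, Real.norm_eq_abs] at hbound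
  have hsq : x ^ 2 * dyckGF 0 x ≤ |x| * (|x| * |dyckGF 0 x|) := by
    rw [← mul_assoc, ← sq, sq_abs]
    exact mul_le_mul_of_nonneg_left (le_abs_self _) (sq_nonneg x)
  have := mul_le_of_le_one_right (abs_nonneg x) hbound
  linarith

theorem dyckD_generating_function (i : ℕ) (x : ℝ) (hx0 : 0 < |x|) (hx1 : |x| < 1 / 2) :
    Summable (fun j : ℕ => |(dyckD i j : ℝ) * x ^ j|) ∧
    (∑' j : ℕ, (dyckD i j : ℝ) * x ^ j) =
      x ^ i * ((1 - Real.sqrt (1 - 4 * x ^ 2)) / (2 * x ^ 2)) ^ (i + 1) := by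
  have hx : ‖x‖ < 1 / 2 := by rwa [Real.norm_eq_abs]
  refine ⟨by simpa only [Real.norm_eq_abs] using summable_norm_dyckD_mul_pow i hx, ?_⟩
  have hF0 := eq_one_sub_sqrt_div_of_eq_one_add_mul_sq (pow_ne_zero 2 (abs_pos.mp hx0))
    (dyckGF_zero_eq_one_add_mul_sq hx) (two_mul_sq_mul_dyckGF_zero_le_one hx1)
  rw [← hF0]
  exact dyckGF_eq_pow i hx
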